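/- arXiv:1609.02456 — 9 statements merged into one kernel-verified Lean document; each statement's English description precedes it below -/
import Mathlib

section
/- Suppose that for every i ∈ {1,…,N} the local matrix Qi = Fiᵀ·Pi + Pi·Fi is negative semidefinite, where each Pi is structured positive definite with ηi = σ̄·Cti for the common constant σ̄ > 0. Then the global closed-loop matrix inequality holds: 𝐅ᵀ·𝐏 + 𝐏·𝐅 is negative semidefinite. -/
open Matrix

/-- The 3×3 matrix with `(1,1)` entry equal to `1` and all other entries zero. -/
noncomputable def E11 : Matrix (Fin 3) (Fin 3) ℝ := !![1, 0, 0; 0, 0, 0; 0, 0, 0]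

/-!
Write `𝐅 = blockdiag(Fᵢ) - K`, where the line coupling `K` has blocks `(Lᵢⱼ / Ctᵢ) • E11` for the
weighted Laplacian `L` of the conductances. Since `𝐏` is symmetric,
`xᵀ(𝐅ᵀ𝐏 + 𝐏𝐅)x = 2 (𝐏x)·(𝐅x)`. The block-diagonal part contributes `∑ᵢ xᵢᵀ Qᵢ xᵢ / 2 ≤ 0`.
The first row of `Pᵢ` is `(σ̄ Ctᵢ, 0, 0)`, so `Pᵢ` cancels the factor `1 / Ctᵢ` of `K` and
`(𝐏x)·(Kx) = σ̄ yᵀLy` with `yᵢ = xᵢ₁`, which is nonnegative because `yᵀLy = ½ ∑ aᵢⱼ (yᵢ - yⱼ)²`.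
-/

namespace Microgrid

variable {ι m : Type*}

theorem dotProduct_mulVec_transpose_mul_add_mul [Fintype m] {M P : Matrix m m ℝ} (hP : Pᵀ = P)
    (x : m → ℝ) : x ⬝ᵥ (Mᵀ * P + P * M) *ᵥ x = 2 * (P *ᵥ x ⬝ᵥ M *ᵥ x) := by
  rw [add_mulVec, dotProduct_add, ← mulVec_mulVec, ← mulVec_mulVec, dotProduct_mulVec x Mᵀ,
    dotProduct_mulVec x P, vecMul_transpose, ← vecMul_transpose P, hP, dotProduct_comm (M *ᵥ x)]
  ring

section Laplacian

variable [Fintype ι] [DecidableEq ι]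

def laplacian (a : ι → ι → ℝ) : Matrix ι ι ℝ :=
  diagonal (fun i => ∑ j, a i j) - of a

theorem dotProduct_laplacian_mulVec {a : ι → ι → ℝ} (ha : ∀ i j, a i j = a j i) (y : ι → ℝ) :
    y ⬝ᵥ laplacian a *ᵥ y = (∑ i, ∑ j, a i j * (y i - y j) ^ 2) / 2 := by
  have hswap : ∑ i, ∑ j, a i j * y j ^ 2 = ∑ i, ∑ j, a i j * y i ^ 2 := by
    rw [Finset.sum_comm]
    simp_rw [ha]
  calc y ⬝ᵥ laplacian a *ᵥ y = ∑ i, ∑ j, a i j * y i ^ 2 - ∑ i, ∑ j, a i j * (y i * y j) := by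
        rw [laplacian, sub_mulVec, dotProduct_sub]
        simp only [dotProduct, mulVec_diagonal]
        simp only [mulVec, dotProduct, of_apply, Finset.mul_sum, Finset.sum_mul]
        congr 1 <;> exact Finset.sum_congr rfl fun i _ => Finset.sum_congr rfl fun j _ => by ring
    _ = (∑ i, ∑ j, a i j * y i ^ 2 + ∑ i, ∑ j, a i j * y j ^ 2) / 2
          - ∑ i, ∑ j, a i j * (y i * y j) := by rw [hswap]; ring
    _ = _ := by
        simp only [← Finset.sum_add_distrib, ← Finset.sum_sub_distrib, Finset.sum_div]
        exact Finset.sum_congr rfl fun i _ => Finset.sum_congr rfl fun j _ => by ring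

theorem dotProduct_laplacian_mulVec_nonneg {a : ι → ι → ℝ} (ha_symm : ∀ i j, a i j = a j i)
    (ha_nonneg : ∀ i j, 0 ≤ a i j) (y : ι → ℝ) : 0 ≤ y ⬝ᵥ laplacian a *ᵥ y := by
  rw [dotProduct_laplacian_mulVec ha_symm]
  exact div_nonneg (Finset.sum_nonneg fun i _ => Finset.sum_nonneg fun j _ =>
    mul_nonneg (ha_nonneg i j) (sq_nonneg (y i - y j))) zero_le_two

end Laplacian

section BlockDiagonal

variable [DecidableEq ι]

/-- Unlike `Matrix.blockDiagonal`, the block index is the first component. -/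
def blockDiagonalFst (B : ι → Matrix m m ℝ) : Matrix (ι × m) (ι × m) ℝ :=
  of fun p q => if p.1 = q.1 then B p.1 p.2 q.2 else 0

theorem blockDiagonalFst_transpose {B : ι → Matrix m m ℝ} (hB : ∀ i, (B i)ᵀ = B i) :
    (blockDiagonalFst B)ᵀ = blockDiagonalFst B := by
  ext ⟨i, k⟩ ⟨j, l⟩
  simp only [transpose_apply, blockDiagonalFst, of_apply]
  by_cases h : i = j
  · subst h
    simp only [if_true]
    exact (congrFun (congrFun (hB i) l) k).symm
  · simp [h, Ne.symm h]

variable [Fintype ι] [Fintype m]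

theorem blockDiagonalFst_mulVec (B : ι → Matrix m m ℝ) (x : ι × m → ℝ) (i : ι) (k : m) :
    (blockDiagonalFst B *ᵥ x) (i, k) = (B i *ᵥ Function.curry x i) k := by
  simp [mulVec, dotProduct, blockDiagonalFst, Fintype.sum_prod_type, Function.curry]

theorem blockDiagonalFst_mulVec_dotProduct (B C : ι → Matrix m m ℝ) (x : ι × m → ℝ) :
    blockDiagonalFst B *ᵥ x ⬝ᵥ blockDiagonalFst C *ᵥ x =
      ∑ i, B i *ᵥ Function.curry x i ⬝ᵥ C i *ᵥ Function.curry x i := by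
  simp only [dotProduct, Fintype.sum_prod_type, blockDiagonalFst_mulVec]

end BlockDiagonal

noncomputable def lineCoupling (L : Matrix ι ι ℝ) (c : ι → ℝ) : Matrix (ι × Fin 3) (ι × Fin 3) ℝ :=
  of fun p q => (L p.1 q.1 / c p.1) * E11 p.2 q.2

theorem dotProduct_lineCoupling_mulVec [Fintype ι] (L : Matrix ι ι ℝ) {c : ι → ℝ}
    (hc : ∀ i, c i ≠ 0) {σ : ℝ} {z : ι × Fin 3 → ℝ} (x : ι × Fin 3 → ℝ)
    (hz : ∀ i, z (i, 0) = σ * c i * x (i, 0)) :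
    z ⬝ᵥ lineCoupling L c *ᵥ x = σ * ((fun i => x (i, 0)) ⬝ᵥ L *ᵥ fun i => x (i, 0)) := by
  simp only [dotProduct, mulVec, lineCoupling, E11, of_apply, Fintype.sum_prod_type,
    Fin.sum_univ_three, cons_val_zero, cons_val_one, cons_val, Finset.mul_sum, hz, mul_one,
    mul_zero, zero_mul, add_zero, Finset.sum_const_zero]
  refine Finset.sum_congr rfl fun i _ => Finset.sum_congr rfl fun j _ => ?_
  field_simp [hc i]

end Microgrid

open Microgrid in
theorem global_lyapunov_negSemidef_general
    (N : ℕ)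
    (Ct : Fin N → ℝ)
    (hCt : ∀ i, 0 < Ct i)
    (F : Fin N → Matrix (Fin 3) (Fin 3) ℝ)
    (a : Fin N → Fin N → ℝ)
    (ha_symm : ∀ i j, a i j = a j i)
    (ha_nonneg : ∀ i j, 0 ≤ a i j)
    (ha_diag : ∀ i, a i i = 0)
    (σ : ℝ) (hσ : 0 < σ)
    (η p22 p23 p33 : Fin N → ℝ)
    (hη : ∀ i, η i = σ * Ct i)
    (P : Fin N → Matrix (Fin 3) (Fin 3) ℝ)
    (hP : ∀ i, P i = !![η i, 0, 0; 0, p22 i, p23 i; 0, p23 i, p33 i])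
    (hQ : ∀ i, ∀ v : Fin 3 → ℝ, v ⬝ᵥ ((F i)ᵀ * P i + P i * F i).mulVec v ≤ 0)
    (bigF bigP : Matrix (Fin N × Fin 3) (Fin N × Fin 3) ℝ)
    (hbigF : ∀ p q : Fin N × Fin 3, bigF p q =
      if p.1 = q.1 then (F p.1 - (∑ l, a p.1 l / Ct p.1) • E11) p.2 q.2
      else ((a p.1 q.1 / Ct p.1) • E11) p.2 q.2)
    (hbigP : ∀ p q : Fin N × Fin 3, bigP p q =
      if p.1 = q.1 then P p.1 p.2 q.2 else 0) :
    ∀ x : (Fin N × Fin 3) → ℝ, x ⬝ᵥ (bigFᵀ * bigP + bigP * bigF).mulVec x ≤ 0 := by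
  intro x
  have hP_symm : ∀ i, (P i)ᵀ = P i := fun i => by
    rw [hP]; ext k l; fin_cases k <;> fin_cases l <;> rfl
  have hbigP_eq : bigP = blockDiagonalFst P := ext hbigP
  have hbigF_eq : bigF = blockDiagonalFst F - lineCoupling (laplacian a) Ct := by
    ext ⟨i, k⟩ ⟨j, l⟩
    by_cases h : i = j
    · subst h
      simp [hbigF, blockDiagonalFst, lineCoupling, laplacian, ha_diag, sub_div, Finset.sum_div]
    · simp [hbigF, blockDiagonalFst, lineCoupling, laplacian, h, neg_div]
  have hlocal : ∀ i, P i *ᵥ Function.curry x i ⬝ᵥ F i *ᵥ Function.curry x i ≤ 0 := fun i => by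
    have := hQ i (Function.curry x i)
    rw [dotProduct_mulVec_transpose_mul_add_mul (hP_symm i)] at this
    linarith
  have hlineCoupling := dotProduct_lineCoupling_mulVec (laplacian a) (fun i => (hCt i).ne') x
    (z := bigP *ᵥ x) (σ := σ) fun i => by
      rw [hbigP_eq, blockDiagonalFst_mulVec, hP, hη]
      simp [mulVec, dotProduct, Fin.sum_univ_three]
  rw [dotProduct_mulVec_transpose_mul_add_mul (hbigP_eq ▸ blockDiagonalFst_transpose hP_symm),
    hbigF_eq, sub_mulVec, dotProduct_sub, hlineCoupling, hbigP_eq,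
    blockDiagonalFst_mulVec_dotProduct]
  have hblocks := Fintype.sum_nonpos hlocal
  have hlines := mul_nonneg hσ.le (dotProduct_laplacian_mulVec_nonneg ha_symm ha_nonneg
    fun i => x (i, 0))
  linarith

/-- If each local matrix `Qᵢ = Fᵢᵀ·Pᵢ + Pᵢ·Fᵢ` is negative semidefinite, with the
structured positive definite matrices `Pᵢ` satisfying `ηᵢ = σ̄·Ctᵢ` for a common
constant `σ̄ > 0`, then the global closed-loop matrix inequality
`𝐅ᵀ·𝐏 + 𝐏·𝐅 ≤ 0` holds. -/
theorem global_lyapunov_negSemidef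
    (N : ℕ) (hN : 1 ≤ N)
    (Rt Lt Ct k1 k2 k3 : Fin N → ℝ)
    (hRt : ∀ i, 0 < Rt i) (hLt : ∀ i, 0 < Lt i) (hCt : ∀ i, 0 < Ct i)
    (F : Fin N → Matrix (Fin 3) (Fin 3) ℝ)
    (hF : ∀ i, F i = !![0, 1/Ct i, 0;
                        (k1 i - 1)/Lt i, (k2 i - Rt i)/Lt i, k3 i/Lt i;
                        -1, 0, 0])
    (a : Fin N → Fin N → ℝ)
    (ha_symm : ∀ i j, a i j = a j i)
    (ha_nonneg : ∀ i j, 0 ≤ a i j)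
    (ha_diag : ∀ i, a i i = 0)
    (σ : ℝ) (hσ : 0 < σ)
    (η p22 p23 p33 : Fin N → ℝ)
    (hη : ∀ i, η i = σ * Ct i)
    (P : Fin N → Matrix (Fin 3) (Fin 3) ℝ)
    (hP : ∀ i, P i = !![η i, 0, 0; 0, p22 i, p23 i; 0, p23 i, p33 i])
    (hPpd : ∀ i, (P i).PosDef)
    (hQ : ∀ i, ∀ v : Fin 3 → ℝ, v ⬝ᵥ ((F i)ᵀ * P i + P i * F i).mulVec v ≤ 0)
    (bigF bigP : Matrix (Fin N × Fin 3) (Fin N × Fin 3) ℝ)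
    (hbigF : ∀ p q : Fin N × Fin 3, bigF p q =
      if p.1 = q.1 then (F p.1 - (∑ l, a p.1 l / Ct p.1) • E11) p.2 q.2
      else ((a p.1 q.1 / Ct p.1) • E11) p.2 q.2)
    (hbigP : ∀ p q : Fin N × Fin 3, bigP p q =
      if p.1 = q.1 then P p.1 p.2 q.2 else 0) :
    ∀ x : (Fin N × Fin 3) → ℝ, x ⬝ᵥ (bigFᵀ * bigP + bigP * bigF).mulVec x ≤ 0 :=
  global_lyapunov_negSemidef_general N Ct hCt F a ha_symm ha_nonneg ha_diag σ hσ η p22 p23 p33 hη P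
    hP hQ bigF bigP hbigF hbigP
end

section
/- Assume Q is negative semidefinite and k3 ≠ 0. Then for every vector v ∈ ℝ², one has vᵀ·Q22·v = 0 if and only if v lies in the kernel of 𝓕22, i.e. 𝓕22·v = 0. -/
open Matrix

/-! For any `A` and symmetric `P`, the quadratic form of `Aᵀ P + P A` is `v ↦ 2 (A v)ᵀ P v`, so it
vanishes on `Ker A`. Conversely, `Q22` is a principal block of the negative semidefinite `Q`, hence
negative semidefinite itself, and `vᵀ Q22 v = 0` forces `Q22 v = 0`. Since `𝓕22` has rank one,
`𝓕22² = a 𝓕22` for a scalar `a`; pairing `Q22 v = 0` with `w = 𝓕22 v` then leaves `wᵀ P22 w = 0`,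
so `w = 0` because `P22` is positive definite. -/

section Lyapunov

variable {n : Type*} [Fintype n]

theorem dotProduct_mulVec_transpose_mul_add_mul {R : Type*} [CommRing R] (A P : Matrix n n R)
    (v : n → R) :
    v ⬝ᵥ (Aᵀ * P + P * A) *ᵥ v = (A *ᵥ v) ⬝ᵥ (P *ᵥ v) + (v ᵥ* P) ⬝ᵥ (A *ᵥ v) := by
  rw [add_mulVec, dotProduct_add, ← mulVec_mulVec, ← mulVec_mulVec, dotProduct_mulVec v Aᵀ,
    vecMul_transpose, dotProduct_mulVec v P]

theorem dotProduct_mulVec_transpose_mul_add_mul_of_mulVec_eq_zero {R : Type*} [CommRing R]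
    {A : Matrix n n R} (P : Matrix n n R) {v : n → R} (hv : A *ᵥ v = 0) :
    v ⬝ᵥ (Aᵀ * P + P * A) *ᵥ v = 0 := by
  simp [dotProduct_mulVec_transpose_mul_add_mul, hv]

theorem dotProduct_mulVec_transpose_mul_add_mul_of_isHermitian {A P : Matrix n n ℝ}
    (hP : P.IsHermitian) (v : n → ℝ) :
    v ⬝ᵥ (Aᵀ * P + P * A) *ᵥ v = 2 * ((A *ᵥ v) ⬝ᵥ (P *ᵥ v)) := by
  have hPv : v ᵥ* P = P *ᵥ v := by
    rw [← vecMul_transpose, ← conjTranspose_eq_transpose_of_trivial, hP.eq]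
  rw [dotProduct_mulVec_transpose_mul_add_mul, hPv, dotProduct_comm (P *ᵥ v)]
  ring

theorem isHermitian_transpose_mul_add_mul (A : Matrix n n ℝ) {P : Matrix n n ℝ}
    (hP : P.IsHermitian) : (Aᵀ * P + P * A).IsHermitian := by
  have hPt : Pᵀ = P := by rw [← conjTranspose_eq_transpose_of_trivial, hP.eq]
  rw [IsHermitian, conjTranspose_eq_transpose_of_trivial, transpose_add, transpose_mul,
    transpose_mul, transpose_transpose, hPt, add_comm]

theorem mulVec_eq_zero_of_dotProduct_mulVec_transpose_mul_add_mul_eq_zero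
    {A P : Matrix n n ℝ} {c : ℝ} (hA : A * A = c • A) (hP : P.PosDef)
    (hM : (-(Aᵀ * P + P * A)).PosSemidef) {v : n → ℝ}
    (hv : v ⬝ᵥ (Aᵀ * P + P * A) *ᵥ v = 0) : A *ᵥ v = 0 := by
  set w := A *ᵥ v
  have hwPv : w ⬝ᵥ P *ᵥ v = 0 := by
    rw [dotProduct_mulVec_transpose_mul_add_mul_of_isHermitian hP.isHermitian] at hv
    simpa using hv
  have hMv : (Aᵀ * P + P * A) *ᵥ v = 0 := by
    have h := (hM.dotProduct_mulVec_zero_iff v).1 (by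
      rw [star_trivial, neg_mulVec, dotProduct_neg, hv, neg_zero])
    rwa [neg_mulVec, neg_eq_zero] at h
  have hAw : A *ᵥ w = c • w := by rw [mulVec_mulVec, hA, smul_mulVec]
  have hwPw : w ⬝ᵥ P *ᵥ w = 0 := calc
    w ⬝ᵥ P *ᵥ w = w ⬝ᵥ (Aᵀ * P + P * A) *ᵥ v - c * (w ⬝ᵥ P *ᵥ v) := by
      rw [add_mulVec, dotProduct_add, ← mulVec_mulVec, dotProduct_mulVec w Aᵀ, vecMul_transpose,
        hAw, smul_dotProduct, ← mulVec_mulVec, smul_eq_mul]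
      ring
    _ = 0 := by rw [hMv, hwPv, dotProduct_zero]; ring
  by_contra hw
  exact (hP.dotProduct_mulVec_pos hw).ne' (by simpa using hwPw)

end Lyapunov

theorem submatrix_succ_transpose_mul_add_mul {R : Type*} [CommRing R] {m : ℕ}
    (F : Matrix (Fin (m + 1)) (Fin (m + 1)) R)
    {P : Matrix (Fin (m + 1)) (Fin (m + 1)) R} (hP₀ : ∀ j : Fin m, P 0 j.succ = 0)
    (hP₀' : ∀ i : Fin m, P i.succ 0 = 0) :
    (Fᵀ * P + P * F).submatrix Fin.succ Fin.succ =
      (F.submatrix Fin.succ Fin.succ)ᵀ * P.submatrix Fin.succ Fin.succ +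
        P.submatrix Fin.succ Fin.succ * F.submatrix Fin.succ Fin.succ := by
  ext i j
  simp [mul_apply, Fin.sum_univ_succ, hP₀, hP₀']

theorem quadratic_zero_iff_ker_F22_general
    (Rt Lt Ct : ℝ)
    (k1 k2 k3 : ℝ) (η p22 p23 p33 : ℝ)
    (F P : Matrix (Fin 3) (Fin 3) ℝ)
    (hF : F = !![0, 1/Ct, 0; (k1 - 1)/Lt, (k2 - Rt)/Lt, k3/Lt; -1, 0, 0])
    (hP : P = !![η, 0, 0; 0, p22, p23; 0, p23, p33])
    (hPpd : P.PosDef)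
    (Q : Matrix (Fin 3) (Fin 3) ℝ) (hQ : Q = Fᵀ * P + P * F)
    (F22 P22 Q22 : Matrix (Fin 2) (Fin 2) ℝ)
    (hF22 : F22 = !![(k2 - Rt)/Lt, k3/Lt; 0, 0])
    (hP22 : P22 = !![p22, p23; p23, p33])
    (hQ22 : Q22 = F22ᵀ * P22 + P22 * F22)
    (hns : ∀ x : Fin 3 → ℝ, x ⬝ᵥ Q.mulVec x ≤ 0) :
    ∀ v : Fin 2 → ℝ, v ⬝ᵥ Q22.mulVec v = 0 ↔ F22.mulVec v = 0 := by
  have hF22_block : F22 = F.submatrix Fin.succ Fin.succ := by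
    subst hF hF22; ext i j; fin_cases i <;> fin_cases j <;> rfl
  have hP22_block : P22 = P.submatrix Fin.succ Fin.succ := by
    subst hP hP22; ext i j; fin_cases i <;> fin_cases j <;> rfl
  have hQ22_block : Q22 = Q.submatrix Fin.succ Fin.succ := by
    rw [hQ22, hQ, submatrix_succ_transpose_mul_add_mul F (by simp [hP, Fin.forall_fin_two])
      (by simp [hP, Fin.forall_fin_two]), ← hF22_block, ← hP22_block]
  have hQ_nsd : (-Q).PosSemidef := by
    refine .of_dotProduct_mulVec_nonneg ?_ fun x ↦ by
      rw [star_trivial, neg_mulVec, dotProduct_neg, neg_nonneg]; exact hns x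
    rw [hQ]
    exact (isHermitian_transpose_mul_add_mul F hPpd.isHermitian).neg
  have hQ22_nsd : (-Q22).PosSemidef := by
    rw [hQ22_block]
    exact hQ_nsd.submatrix Fin.succ
  have hP22_pd : P22.PosDef := hP22_block ▸ hPpd.submatrix (Fin.succ_injective 2)
  have hF22_sq : F22 * F22 = ((k2 - Rt) / Lt) • F22 := by
    subst hF22; ext i j; fin_cases i <;> fin_cases j <;> simp [mul_apply, Fin.sum_univ_two]
  rw [hQ22] at hQ22_nsd ⊢
  exact fun v ↦ ⟨mulVec_eq_zero_of_dotProduct_mulVec_transpose_mul_add_mul_eq_zero hF22_sq hP22_pd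
    hQ22_nsd, dotProduct_mulVec_transpose_mul_add_mul_of_mulVec_eq_zero P22⟩

/-- If `Q = Fᵀ·P + P·F` is negative semidefinite and `k3 ≠ 0`, then, for every
`v ∈ ℝ²`, `vᵀ·Q22·v = 0` if and only if `v ∈ Ker(𝓕22)`. -/
theorem quadratic_zero_iff_ker_F22
    (Rt Lt Ct : ℝ) (hRt : 0 < Rt) (hLt : 0 < Lt) (hCt : 0 < Ct)
    (k1 k2 k3 : ℝ) (η p22 p23 p33 : ℝ) (hη : 0 < η)
    (F P : Matrix (Fin 3) (Fin 3) ℝ)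
    (hF : F = !![0, 1/Ct, 0; (k1 - 1)/Lt, (k2 - Rt)/Lt, k3/Lt; -1, 0, 0])
    (hP : P = !![η, 0, 0; 0, p22, p23; 0, p23, p33])
    (hPpd : P.PosDef)
    (Q : Matrix (Fin 3) (Fin 3) ℝ) (hQ : Q = Fᵀ * P + P * F)
    (F22 P22 Q22 : Matrix (Fin 2) (Fin 2) ℝ)
    (hF22 : F22 = !![(k2 - Rt)/Lt, k3/Lt; 0, 0])
    (hP22 : P22 = !![p22, p23; p23, p33])
    (hQ22 : Q22 = F22ᵀ * P22 + P22 * F22)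
    (hns : ∀ x : Fin 3 → ℝ, x ⬝ᵥ Q.mulVec x ≤ 0)
    (hk3 : k3 ≠ 0) :
    ∀ v : Fin 2 → ℝ, v ⬝ᵥ Q22.mulVec v = 0 ↔ F22.mulVec v = 0 :=
  quadratic_zero_iff_ker_F22_general Rt Lt Ct k1 k2 k3 η p22 p23 p33 F P hF hP hPpd Q hQ F22 P22 Q22
    hF22 hP22 hQ22 hns
end

section
/- Assume Q22 is negative semidefinite, k3 ≠ 0, and P22 is symmetric positive definite. Then k2 ≠ Rt (equivalently, the (1,1) entry (k2−Rt)/Lt of 𝓕22 is nonzero). -/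
open Matrix

/-! If `k2 = Rt`, then `Q22 = !![0, c; c, 2 k3 p23 / Lt]` with `c = k3 p22 / Lt ≠ 0`, and a negative
semidefinite form with a vanishing diagonal entry cannot have a nonzero cross term in that variable. -/

/-- Along the line `eⱼ + t eᵢ` the form is affine in `t` and bounded above, hence constant. -/
theorem Matrix.apply_add_apply_eq_zero_of_dotProduct_mulVec_nonpos
    {n : Type*} [Fintype n] [DecidableEq n] {Q : Matrix n n ℝ}
    (hQ : ∀ x : n → ℝ, x ⬝ᵥ Q *ᵥ x ≤ 0) {i j : n} (hii : Q i i = 0) :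
    Q i j + Q j i = 0 := by
  by_contra hc
  have hline : ∀ t : ℝ, Q j j + t * (Q i j + Q j i) ≤ 0 := fun t => by
    have := hQ (Pi.single j 1 + t • Pi.single i 1)
    simp only [mulVec_add, mulVec_smul, mulVec_single_one, add_dotProduct, dotProduct_add,
      smul_dotProduct, dotProduct_smul, single_dotProduct, smul_eq_mul, one_mul, col_apply,
      hii] at this
    linarith
  have := hline ((1 - Q j j) / (Q i j + Q j i))
  rw [div_mul_cancel₀ _ hc] at this
  linarith

theorem k2_ne_Rt_general
    (Rt Lt : ℝ) (hLt : 0 < Lt)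
    (k2 k3 : ℝ) (p22 p23 p33 : ℝ)
    (F22 P22 Q22 : Matrix (Fin 2) (Fin 2) ℝ)
    (hF22 : F22 = !![(k2 - Rt)/Lt, k3/Lt; 0, 0])
    (hP22 : P22 = !![p22, p23; p23, p33])
    (hP22pd : P22.PosDef)
    (hQ22 : Q22 = F22ᵀ * P22 + P22 * F22)
    (hns : ∀ x : Fin 2 → ℝ, x ⬝ᵥ Q22.mulVec x ≤ 0)
    (hk3 : k3 ≠ 0) :
    k2 ≠ Rt := by
  rintro rfl
  have hp22 : 0 < p22 := by simpa [hP22] using hP22pd.diag_pos (i := 0)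
  have hQ : Q22 = !![0, k3 / Lt * p22; k3 / Lt * p22, 2 * (k3 / Lt) * p23] := by
    subst hQ22 hF22 hP22
    ext i j
    fin_cases i <;> fin_cases j <;> simp [mul_apply, Fin.sum_univ_two] <;> ring
  have hcross := apply_add_apply_eq_zero_of_dotProduct_mulVec_nonpos hns (i := 0) (j := 1)
    (by simp [hQ])
  simp only [hQ, of_apply, cons_val_zero, cons_val_one, cons_val'] at hcross
  exact mul_ne_zero (div_ne_zero hk3 hLt.ne') hp22.ne' (by linarith)

/-- If `Q22 = 𝓕22ᵀ·P22 + P22·𝓕22` is negative semidefinite with `P22` symmetric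
positive definite and `k3 ≠ 0`, then `k2 ≠ Rt`. -/
theorem k2_ne_Rt
    (Rt Lt Ct : ℝ) (hRt : 0 < Rt) (hLt : 0 < Lt) (hCt : 0 < Ct)
    (k1 k2 k3 : ℝ) (p22 p23 p33 : ℝ)
    (F22 P22 Q22 : Matrix (Fin 2) (Fin 2) ℝ)
    (hF22 : F22 = !![(k2 - Rt)/Lt, k3/Lt; 0, 0])
    (hP22 : P22 = !![p22, p23; p23, p33])
    (hP22pd : P22.PosDef)
    (hQ22 : Q22 = F22ᵀ * P22 + P22 * F22)
    (hns : ∀ x : Fin 2 → ℝ, x ⬝ᵥ Q22.mulVec x ≤ 0)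
    (hk3 : k3 ≠ 0) :
    k2 ≠ Rt :=
  k2_ne_Rt_general Rt Lt hLt k2 k3 p22 p23 p33 F22 P22 Q22 hF22 hP22 hP22pd hQ22 hns hk3
end

section
/- Assume Q is negative semidefinite and k3 ≠ 0, and set δ = −(k2−Rt)/k3. Then the entries of P satisfy p22 = −δ·p23. -/
/-!
Test `Q` on the vectors `x = (0, a, b)` only: since `P` is symmetric,
`xᵀ Q x = 2 xᵀ P F x = (2 / Lt) ((k2 - Rt) a + k3 b) (p22 a + p23 b)`. A product of two
linear forms in `(a, b)` that never takes a positive value must have proportional factors (otherwise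
both factors can be made equal to `1` simultaneously), which gives `(k2 - Rt) p23 = k3 p22`.
-/

open Matrix

theorem Matrix.dotProduct_transpose_mul_add_mul_mulVec {n R : Type*} [Fintype n] [CommRing R]
    {P : Matrix n n R} (hP : P.IsSymm) (F : Matrix n n R) (x : n → R) :
    x ⬝ᵥ (Fᵀ * P + P * F) *ᵥ x = 2 * (x ⬝ᵥ P *ᵥ (F *ᵥ x)) := by
  have hFP : x ⬝ᵥ (Fᵀ * P) *ᵥ x = x ⬝ᵥ P *ᵥ (F *ᵥ x) := by
    rw [← mulVec_mulVec, dotProduct_mulVec, vecMul_transpose, dotProduct_comm,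
      dotProduct_mulVec x P, ← vecMul_transpose, hP.eq]
  rw [add_mulVec, dotProduct_add, hFP, ← mulVec_mulVec, two_mul]

theorem mul_eq_mul_of_forall_linear_mul_linear_nonpos {K : Type*} [Field K] [LinearOrder K]
    [IsStrictOrderedRing K] {α β γ ε : K}
    (h : ∀ a b : K, (α * a + β * b) * (γ * a + ε * b) ≤ 0) : α * ε = β * γ := by
  by_contra hne
  have hD : α * ε - β * γ ≠ 0 := sub_ne_zero.mpr hne
  have hone := h ((ε - β) / (α * ε - β * γ)) ((α - γ) / (α * ε - β * γ))
  have hfst : α * ((ε - β) / (α * ε - β * γ)) + β * ((α - γ) / (α * ε - β * γ)) = 1 := by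
    rw [mul_div_assoc', mul_div_assoc', ← add_div, div_eq_one_iff_eq hD]; ring
  have hsnd : γ * ((ε - β) / (α * ε - β * γ)) + ε * ((α - γ) / (α * ε - β * γ)) = 1 := by
    rw [mul_div_assoc', mul_div_assoc', ← add_div, div_eq_one_iff_eq hD]; ring
  rw [hfst, hsnd] at hone
  norm_num at hone

theorem p22_eq_neg_delta_p23_general
    (Rt Lt Ct : ℝ) (hLt : 0 < Lt)
    (k1 k2 k3 : ℝ) (η p22 p23 p33 : ℝ)
    (F P : Matrix (Fin 3) (Fin 3) ℝ)
    (hF : F = !![0, 1/Ct, 0; (k1 - 1)/Lt, (k2 - Rt)/Lt, k3/Lt; -1, 0, 0])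
    (hP : P = !![η, 0, 0; 0, p22, p23; 0, p23, p33])
    (Q : Matrix (Fin 3) (Fin 3) ℝ) (hQ : Q = Fᵀ * P + P * F)
    (hns : ∀ x : Fin 3 → ℝ, x ⬝ᵥ Q.mulVec x ≤ 0)
    (hk3 : k3 ≠ 0)
    (δ : ℝ) (hδ : δ = -(k2 - Rt)/k3) :
    p22 = -δ * p23 := by
  have hPsymm : P.IsSymm := by
    subst hP; ext i j; fin_cases i <;> fin_cases j <;> rfl
  have hform (a b : ℝ) : ((k2 - Rt) * a + k3 * b) * (p22 * a + p23 * b) ≤ 0 := by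
    have hx := hns ![0, a, b]
    have hval : (![0, a, b] : Fin 3 → ℝ) ⬝ᵥ P *ᵥ (F *ᵥ ![0, a, b])
        = ((k2 - Rt) * a + k3 * b) / Lt * (p22 * a + p23 * b) := by
      subst hF hP
      simp only [dotProduct, mulVec, Fin.sum_univ_three, of_apply, cons_val', cons_val_fin_one,
        cons_val_zero, cons_val_one, cons_val]
      ring
    rw [hQ, dotProduct_transpose_mul_add_mul_mulVec hPsymm, hval, div_mul_eq_mul_div,
      mul_div_assoc'] at hx
    linarith [(div_le_iff₀ hLt).mp hx]
  have hprop := mul_eq_mul_of_forall_linear_mul_linear_nonpos hform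
  rw [hδ]
  field_simp
  linarith

/-- If `Q = Fᵀ·P + P·F` is negative semidefinite and `k3 ≠ 0`, then, with
`δ = −(k2−Rt)/k3`, the entries of the structured matrix `P` satisfy
`p22 = −δ·p23`. -/
theorem p22_eq_neg_delta_p23
    (Rt Lt Ct : ℝ) (hRt : 0 < Rt) (hLt : 0 < Lt) (hCt : 0 < Ct)
    (k1 k2 k3 : ℝ) (η p22 p23 p33 : ℝ) (hη : 0 < η)
    (F P : Matrix (Fin 3) (Fin 3) ℝ)
    (hF : F = !![0, 1/Ct, 0; (k1 - 1)/Lt, (k2 - Rt)/Lt, k3/Lt; -1, 0, 0])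
    (hP : P = !![η, 0, 0; 0, p22, p23; 0, p23, p33])
    (hPpd : P.PosDef)
    (Q : Matrix (Fin 3) (Fin 3) ℝ) (hQ : Q = Fᵀ * P + P * F)
    (hns : ∀ x : Fin 3 → ℝ, x ⬝ᵥ Q.mulVec x ≤ 0)
    (hk3 : k3 ≠ 0)
    (δ : ℝ) (hδ : δ = -(k2 - Rt)/k3) :
    p22 = -δ * p23 :=
  p22_eq_neg_delta_p23_general Rt Lt Ct hLt k1 k2 k3 η p22 p23 p33 F P hF hP Q hQ hns hk3 δ hδ
end

section
/- Assume Q is negative semidefinite, k3 ≠ 0, and that the (1,1) entry of P equals η = σ̄·Ct for some σ̄ > 0. Set δ = −(k2−Rt)/k3. Then δ ≠ 0 and the gain k1 satisfies k1 = 1 − Lt/δ − σ̄·Lt/p22. -/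
/-!
Writing `x = (u, v, w)`, the form `xᵀ Q x = 2 xᵀ P F x` has no `u²` term. Viewed as a quadratic
in `u` (with `v = 1, w = 0`) it is nonpositive, so its discriminant, the square of the `uv`
coefficient, vanishes; this gives `k1` in terms of `p23`. Viewed as a quadratic in `v` (with
`u = 0, w = 1`) its discriminant is `4 (p22 c − p23 b)²`, so `p22 k3 = p23 (k2 − Rt)`, which
expresses `p23` through `δ` and forces `k2 ≠ Rt` since `p22 > 0`.
-/

open Matrix

/-- The matrix `F`, with `f = 1/Ct`, `a = (k1−1)/Lt`, `b = (k2−Rt)/Lt`, `c = k3/Lt`. -/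
def closedLoopMatrix (f a b c : ℝ) : Matrix (Fin 3) (Fin 3) ℝ :=
  !![0, f, 0; a, b, c; -1, 0, 0]

def structuredLyapunovMatrix (η p22 p23 p33 : ℝ) : Matrix (Fin 3) (Fin 3) ℝ :=
  !![η, 0, 0; 0, p22, p23; 0, p23, p33]

section LyapunovInequality

variable {f a b c η p22 p23 p33 : ℝ}

theorem closedLoop_lyapunov_quadForm (u v w : ℝ) :
    ![u, v, w] ⬝ᵥ ((closedLoopMatrix f a b c)ᵀ * structuredLyapunovMatrix η p22 p23 p33 +
        structuredLyapunovMatrix η p22 p23 p33 * closedLoopMatrix f a b c) *ᵥ ![u, v, w] =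
      2 * ((η * f + p22 * a - p23) * u * v + (p23 * a - p33) * u * w + p22 * b * v ^ 2 +
        (p22 * c + p23 * b) * v * w + p23 * c * w ^ 2) := by
  simp [closedLoopMatrix, structuredLyapunovMatrix, mulVec, dotProduct, Fin.sum_univ_three,
    mul_apply]
  ring

variable (hneg : ∀ x : Fin 3 → ℝ,
  x ⬝ᵥ ((closedLoopMatrix f a b c)ᵀ * structuredLyapunovMatrix η p22 p23 p33 +
    structuredLyapunovMatrix η p22 p23 p33 * closedLoopMatrix f a b c) *ᵥ x ≤ 0)
include hneg

theorem uv_coeff_eq_zero_of_lyapunov : η * f + p22 * a - p23 = 0 := by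
  have hdisc := discrim_le_zero_of_nonpos (a := 0) (b := 2 * (η * f + p22 * a - p23))
    (c := 2 * p22 * b) fun u => by
      have := hneg ![u, 1, 0]
      rw [closedLoop_lyapunov_quadForm] at this
      linarith
  rw [discrim] at hdisc
  exact (sq_nonpos_iff _).mp (by nlinarith)

theorem vw_coeff_relation_of_lyapunov : p22 * c = p23 * b := by
  have hdisc := discrim_le_zero_of_nonpos (a := 2 * p22 * b) (b := 2 * (p22 * c + p23 * b))
    (c := 2 * p23 * c) fun v => by
      have := hneg ![0, v, 1]
      rw [closedLoop_lyapunov_quadForm] at this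
      linarith
  rw [discrim] at hdisc
  exact sub_eq_zero.mp <| (sq_nonpos_iff _).mp (by nlinarith)

end LyapunovInequality

theorem k1_formula_general
    (Rt Lt Ct : ℝ) (hLt : 0 < Lt) (hCt : 0 < Ct)
    (k1 k2 k3 : ℝ) (η p22 p23 p33 : ℝ)
    (F P : Matrix (Fin 3) (Fin 3) ℝ)
    (hF : F = !![0, 1/Ct, 0; (k1 - 1)/Lt, (k2 - Rt)/Lt, k3/Lt; -1, 0, 0])
    (hP : P = !![η, 0, 0; 0, p22, p23; 0, p23, p33])
    (hPpd : P.PosDef)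
    (Q : Matrix (Fin 3) (Fin 3) ℝ) (hQ : Q = Fᵀ * P + P * F)
    (hns : ∀ x : Fin 3 → ℝ, x ⬝ᵥ Q.mulVec x ≤ 0)
    (hk3 : k3 ≠ 0)
    (σ : ℝ) (hησ : η = σ * Ct)
    (δ : ℝ) (hδ : δ = -(k2 - Rt)/k3) :
    δ ≠ 0 ∧ k1 = 1 - Lt/δ - σ * Lt / p22 := by
  subst hQ
  have hp22 : 0 < p22 := by simpa [hP] using hPpd.diag_pos (i := 1)
  rw [hF, hP] at hns
  have huv := uv_coeff_eq_zero_of_lyapunov hns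
  have hvw := vw_coeff_relation_of_lyapunov hns
  have hk2 : k2 - Rt ≠ 0 := by
    intro h
    rw [h, zero_div, mul_zero] at hvw
    exact div_ne_zero hk3 hLt.ne' (by simpa [hp22.ne'] using hvw)
  refine ⟨hδ ▸ div_ne_zero (neg_ne_zero.mpr hk2) hk3, ?_⟩
  subst hδ hησ
  field_simp at huv hvw ⊢
  linear_combination (k2 - Rt) * huv - Lt * hvw

/-- If `Q = Fᵀ·P + P·F` is negative semidefinite, `k3 ≠ 0` and `η = σ̄·Ct` with
`σ̄ > 0`, then, with `δ = −(k2−Rt)/k3`, one has `δ ≠ 0` and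
`k1 = 1 − Lt/δ − σ̄·Lt/p22`. -/
theorem k1_formula
    (Rt Lt Ct : ℝ) (hRt : 0 < Rt) (hLt : 0 < Lt) (hCt : 0 < Ct)
    (k1 k2 k3 : ℝ) (η p22 p23 p33 : ℝ) (hη : 0 < η)
    (F P : Matrix (Fin 3) (Fin 3) ℝ)
    (hF : F = !![0, 1/Ct, 0; (k1 - 1)/Lt, (k2 - Rt)/Lt, k3/Lt; -1, 0, 0])
    (hP : P = !![η, 0, 0; 0, p22, p23; 0, p23, p33])
    (hPpd : P.PosDef)
    (Q : Matrix (Fin 3) (Fin 3) ℝ) (hQ : Q = Fᵀ * P + P * F)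
    (hns : ∀ x : Fin 3 → ℝ, x ⬝ᵥ Q.mulVec x ≤ 0)
    (hk3 : k3 ≠ 0)
    (σ : ℝ) (hσ : 0 < σ) (hησ : η = σ * Ct)
    (δ : ℝ) (hδ : δ = -(k2 - Rt)/k3) :
    δ ≠ 0 ∧ k1 = 1 - Lt/δ - σ * Lt / p22 :=
  k1_formula_general Rt Lt Ct hLt hCt k1 k2 k3 η p22 p23 p33 F P hF hP hPpd Q hQ hns hk3 σ hησ δ hδ
end

section
/- Assume Q is negative semidefinite, k3 ≠ 0, and that the (1,1) entry of P equals η = σ̄·Ct for some σ̄ > 0. Set δ = −(k2−Rt)/k3. Then (k1 − 1)·δ ≠ −Lt, i.e. δ is never equal to −Lt/(k1 − 1). -/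
/-!
Writing `F = !![0, s, 0; a, b, c; -1, 0, 0]`, the quadratic form of `Q = FᵀP + PF` is
`2 (Q₁₂ x y + Q₁₃ x z + (b y + c z)(p22 y + p23 z))` with `Q₁₂ = η s + a p22 - p23`.
It has no `x²` term, so `Q ≤ 0` forces `Q₁₂ = 0`; and a product of two linear forms of constant sign
forces them to be proportional, `b p23 = c p22`. With `b = -δ c` this gives `p22 = -δ p23`, and if
moreover `a δ = -1` then `Q₁₂ = η s = σ̄`, which is not zero.
-/

open Matrix

lemma eq_zero_of_forall_mul_add_nonpos {a b : ℝ} (h : ∀ t : ℝ, t * a + b ≤ 0) : a = 0 := by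
  by_contra ha
  have := h ((1 - b) / a)
  rw [div_mul_cancel₀ _ ha] at this
  linarith

lemma mul_eq_mul_of_forall_linear_mul_linear_nonpos_s9 {a b c d : ℝ}
    (h : ∀ y z : ℝ, (a * y + b * z) * (c * y + d * z) ≤ 0) : a * d = b * c := by
  by_contra hne
  have hD : a * d - b * c ≠ 0 := sub_ne_zero.mpr hne
  have := h ((d - b) * (a * d - b * c)⁻¹) ((a - c) * (a * d - b * c)⁻¹)
  have h1 : a * ((d - b) * (a * d - b * c)⁻¹) + b * ((a - c) * (a * d - b * c)⁻¹) = 1 := by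
    rw [← mul_inv_cancel₀ hD]; ring
  have h2 : c * ((d - b) * (a * d - b * c)⁻¹) + d * ((a - c) * (a * d - b * c)⁻¹) = 1 := by
    rw [← mul_inv_cancel₀ hD]; ring
  rw [h1, h2] at this
  norm_num at this

lemma dotProduct_transpose_mul_add_mul_mulVec (η p22 p23 p33 s a b c x y z : ℝ) :
    ![x, y, z] ⬝ᵥ ((!![0, s, 0; a, b, c; -1, 0, 0]ᵀ * !![η, 0, 0; 0, p22, p23; 0, p23, p33]
      + !![η, 0, 0; 0, p22, p23; 0, p23, p33] * !![0, s, 0; a, b, c; -1, 0, 0]) *ᵥ ![x, y, z])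
      = 2 * ((η * s + a * p22 - p23) * x * y + (a * p23 - p33) * x * z
        + (b * y + c * z) * (p22 * y + p23 * z)) := by
  simp [dotProduct, mulVec, Fin.sum_univ_three, Matrix.add_apply, Matrix.mul_apply]
  ring

theorem delta_ne_general
    (Rt Lt Ct : ℝ) (hLt : 0 < Lt) (hCt : 0 < Ct)
    (k1 k2 k3 : ℝ) (η p22 p23 p33 : ℝ)
    (F P : Matrix (Fin 3) (Fin 3) ℝ)
    (hF : F = !![0, 1/Ct, 0; (k1 - 1)/Lt, (k2 - Rt)/Lt, k3/Lt; -1, 0, 0])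
    (hP : P = !![η, 0, 0; 0, p22, p23; 0, p23, p33])
    (Q : Matrix (Fin 3) (Fin 3) ℝ) (hQ : Q = Fᵀ * P + P * F)
    (hns : ∀ x : Fin 3 → ℝ, x ⬝ᵥ Q.mulVec x ≤ 0)
    (hk3 : k3 ≠ 0)
    (σ : ℝ) (hσ : 0 < σ) (hησ : η = σ * Ct)
    (δ : ℝ) (hδ : δ = -(k2 - Rt)/k3) :
    (k1 - 1) * δ ≠ -Lt := by
  intro hcon
  subst hF hP hQ
  have hform (x y z : ℝ) :=
    dotProduct_transpose_mul_add_mul_mulVec η p22 p23 p33 _ _ _ _ x y z ▸ hns ![x, y, z]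
  have hQ12 : η * (1 / Ct) + (k1 - 1) / Lt * p22 - p23 = 0 :=
    eq_zero_of_forall_mul_add_nonpos (b := (k2 - Rt) / Lt * p22) fun x => by
      linarith [hform x 1 0]
  have hprop : (k2 - Rt) / Lt * p23 = k3 / Lt * p22 :=
    mul_eq_mul_of_forall_linear_mul_linear_nonpos_s9 fun y z => by linarith [hform 0 y z]
  have hp22 : p22 = -δ * p23 := by
    rw [hδ]; field_simp at hprop ⊢; linarith
  have : σ * Lt = 0 := by
    rw [hησ, hp22] at hQ12
    field_simp at hQ12
    linear_combination hQ12 + p23 * hcon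
  exact mul_ne_zero hσ.ne' hLt.ne' this

/-- If `Q = Fᵀ·P + P·F` is negative semidefinite, `k3 ≠ 0` and `η = σ̄·Ct` with
`σ̄ > 0`, then, with `δ = −(k2−Rt)/k3`, one has `(k1 − 1)·δ ≠ −Lt`, i.e. `δ` never
equals `−Lt/(k1 − 1)`. -/
theorem delta_ne
    (Rt Lt Ct : ℝ) (hRt : 0 < Rt) (hLt : 0 < Lt) (hCt : 0 < Ct)
    (k1 k2 k3 : ℝ) (η p22 p23 p33 : ℝ) (hη : 0 < η)
    (F P : Matrix (Fin 3) (Fin 3) ℝ)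
    (hF : F = !![0, 1/Ct, 0; (k1 - 1)/Lt, (k2 - Rt)/Lt, k3/Lt; -1, 0, 0])
    (hP : P = !![η, 0, 0; 0, p22, p23; 0, p23, p33])
    (hPpd : P.PosDef)
    (Q : Matrix (Fin 3) (Fin 3) ℝ) (hQ : Q = Fᵀ * P + P * F)
    (hns : ∀ x : Fin 3 → ℝ, x ⬝ᵥ Q.mulVec x ≤ 0)
    (hk3 : k3 ≠ 0)
    (σ : ℝ) (hσ : 0 < σ) (hησ : η = σ * Ct)
    (δ : ℝ) (hδ : δ = -(k2 - Rt)/k3) :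
    (k1 - 1) * δ ≠ -Lt :=
  delta_ne_general Rt Lt Ct hLt hCt k1 k2 k3 η p22 p23 p33 F P hF hP Q hQ hns hk3 σ hσ hησ δ hδ
end

section
/- Let A be a 3×3 real matrix, B a 3×1 real matrix, Γ = diag(γ1, γ2, γ3) with γ1, γ2, γ3 > 0, Y a 3×3 symmetric positive definite matrix whose (1,1) entry is 1/η for some η > 0 and whose (1,2), (1,3), (2,1), (3,1) entries are zero, and G a 1×3 real matrix. Set K = G·Y⁻¹ and P = Y⁻¹. Then the 6×6 block matrix ![![Y·Aᵀ + Gᵀ·Bᵀ + A·Y + B·G, Y], ![Y, −Γ]] is negative semidefinite if and only if (A + B·K)ᵀ·P + P·(A + B·K) + Γ⁻¹ is negative semidefinite; moreover, in that case P is symmetric positive definite with (1,1) entry η and zero (1,2), (1,3), (2,1), (3,1) entries. -/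
/-!
Since `-Γ` is negative definite, the block matrix is negative semidefinite iff its Schur complement
`Y Lᵀ + L Y + Y Γ⁻¹ Y` is, where `L = A + B K` and `B G = B K Y`. Conjugating by the symmetric
matrix `P = Y⁻¹` turns this Schur complement into `Lᵀ P + P L + Γ⁻¹`. The first column of `P`
is read off from `P Y = 1`, as the first column of `Y` is `(1/η) e₁`; the first row then follows
by symmetry.
-/

open Matrix

namespace Matrix

variable {n : Type*} [Fintype n]

theorem IsSymm.forall_dotProduct_mulVec_nonpos_iff {M : Matrix n n ℝ} (hM : M.IsSymm) :
    (∀ x, x ⬝ᵥ M *ᵥ x ≤ 0) ↔ (-M).PosSemidef := by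
  simp [posSemidef_iff_dotProduct_mulVec, hM.neg, neg_mulVec]

theorem IsSymm.transpose_mul_add_mul {P : Matrix n n ℝ} (hP : P.IsSymm) (L : Matrix n n ℝ) :
    (Lᵀ * P + P * L).IsSymm := by
  simp only [IsSymm, transpose_add, transpose_mul, transpose_transpose, hP.eq, add_comm]

variable [DecidableEq n]

theorem posSemidef_neg_fromBlocks_iff {S Y Γ : Matrix n n ℝ} (hY : Y.IsSymm) (hΓ : Γ.PosDef) :
    (-fromBlocks S Y Y (-Γ)).PosSemidef ↔ (-(S + Y * Γ⁻¹ * Y)).PosSemidef := by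
  have := hΓ.isUnit.invertible
  have hblocks : -fromBlocks S Y Y (-Γ) = fromBlocks (-S) (-Y) (-Y)ᴴ Γ := by
    simp [fromBlocks_neg, conjTranspose_eq_transpose_of_trivial, hY.eq]
  rw [hblocks, PosDef.fromBlocks₂₂ _ _ hΓ, conjTranspose_eq_transpose_of_trivial, transpose_neg,
    hY.eq, neg_mul, neg_mul_neg, sub_eq_add_neg, neg_add]

theorem posSemidef_neg_lmi_iff_riccati {L Y Γ : Matrix n n ℝ} (hY : Y.PosDef) (hΓ : Γ.PosDef) :
    (-fromBlocks (Y * Lᵀ + L * Y) Y Y (-Γ)).PosSemidef ↔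
      (-(Lᵀ * Y⁻¹ + Y⁻¹ * L + Γ⁻¹)).PosSemidef := by
  have hYsymm : Y.IsSymm := isHermitian_iff_isSymm.mp hY.isHermitian
  have hdet : IsUnit Y.det := (isUnit_iff_isUnit_det Y).mp hY.isUnit
  have hPsymm : star Y⁻¹ = Y⁻¹ := by
    rw [star_eq_conjTranspose, conjTranspose_eq_transpose_of_trivial, transpose_nonsing_inv,
      hYsymm.eq]
  have hPY : Y⁻¹ * Y = 1 := nonsing_inv_mul Y hdet
  have hYP : Y * Y⁻¹ = 1 := mul_nonsing_inv Y hdet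
  have hconj : Y⁻¹ * (Y * Lᵀ + L * Y + Y * Γ⁻¹ * Y) * Y⁻¹ = Lᵀ * Y⁻¹ + Y⁻¹ * L + Γ⁻¹ := by
    simp only [Matrix.mul_add, Matrix.add_mul, ← Matrix.mul_assoc, hPY, Matrix.one_mul]
    simp only [Matrix.mul_assoc, hYP, Matrix.mul_one]
  rw [posSemidef_neg_fromBlocks_iff hYsymm hΓ, ← hY.inv.isUnit.posSemidef_star_left_conjugate_iff,
    hPsymm, Matrix.mul_neg, Matrix.neg_mul, hconj]

theorem inv_diagonal_of_ne_zero {K : Type*} [Field K] {d : n → K} (hd : ∀ i, d i ≠ 0) :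
    (diagonal d)⁻¹ = diagonal fun i => (d i)⁻¹ := by
  refine inv_eq_left_inv ?_
  rw [diagonal_mul_diagonal, ← diagonal_one]
  exact congrArg diagonal (funext fun i => inv_mul_cancel₀ (hd i))

theorem inv_apply_of_col_eq_zero_off_diag {K : Type*} [Field K] {Y : Matrix n n K}
    (hY : IsUnit Y.det) {i : n} (hcol : ∀ j, j ≠ i → Y j i = 0) (j : n) :
    Y⁻¹ j i = if j = i then (Y i i)⁻¹ else 0 := by
  have hmul : ∀ j, Y⁻¹ j i * Y i i = if j = i then 1 else 0 := fun j => by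
    have := congrFun (congrFun (nonsing_inv_mul Y hY) j) i
    rwa [mul_apply, Finset.sum_eq_single i (fun k _ hk => by rw [hcol k hk, mul_zero])
      (by simp), one_apply] at this
  have hii : Y i i ≠ 0 := right_ne_zero_of_mul_eq_one (by simpa using hmul i)
  split_ifs with hj
  · subst hj
    exact eq_inv_of_mul_eq_one_left (by simpa using hmul j)
  · simpa [hj, hii] using hmul j

theorem mul_transpose_add_mul_feedback {m α : Type*} [Fintype m] [CommRing α]
    {Y : Matrix n n α} (hY : Y.IsSymm) (hdet : IsUnit Y.det)
    {A : Matrix n n α} {B : Matrix n m α} {G : Matrix m n α} :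
    Y * (A + B * (G * Y⁻¹))ᵀ + (A + B * (G * Y⁻¹)) * Y = Y * Aᵀ + Gᵀ * Bᵀ + A * Y + B * G := by
  have hG : G * Y⁻¹ * Y = G := by rw [Matrix.mul_assoc, nonsing_inv_mul Y hdet, Matrix.mul_one]
  conv_rhs => rw [← hG]
  simp only [transpose_add, transpose_mul, Matrix.mul_add, Matrix.add_mul, hY.eq,
    Matrix.mul_assoc]
  abel

end Matrix

theorem lmi_iff_riccati_general
    (A : Matrix (Fin 3) (Fin 3) ℝ) (B : Matrix (Fin 3) (Fin 1) ℝ)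
    (γ : Fin 3 → ℝ) (hγ : ∀ i, 0 < γ i)
    (Γ : Matrix (Fin 3) (Fin 3) ℝ) (hΓ : Γ = Matrix.diagonal γ)
    (η : ℝ)
    (Y : Matrix (Fin 3) (Fin 3) ℝ) (hYpd : Y.PosDef)
    (hY00 : Y 0 0 = 1/η)
    (hY10 : Y 1 0 = 0) (hY20 : Y 2 0 = 0)
    (G : Matrix (Fin 1) (Fin 3) ℝ)
    (K : Matrix (Fin 1) (Fin 3) ℝ) (hK : K = G * Y⁻¹)
    (P : Matrix (Fin 3) (Fin 3) ℝ) (hP : P = Y⁻¹) :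
    ((∀ x : Fin 3 ⊕ Fin 3 → ℝ,
        x ⬝ᵥ (Matrix.fromBlocks (Y * Aᵀ + Gᵀ * Bᵀ + A * Y + B * G) Y Y (-Γ)).mulVec x ≤ 0)
      ↔ (∀ x : Fin 3 → ℝ,
        x ⬝ᵥ ((A + B * K)ᵀ * P + P * (A + B * K)
              + Matrix.diagonal (fun i => (γ i)⁻¹)).mulVec x ≤ 0)) ∧
    ((∀ x : Fin 3 ⊕ Fin 3 → ℝ,
        x ⬝ᵥ (Matrix.fromBlocks (Y * Aᵀ + Gᵀ * Bᵀ + A * Y + B * G) Y Y (-Γ)).mulVec x ≤ 0) →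
      P.IsSymm ∧ P.PosDef ∧ P 0 0 = η ∧
      P 0 1 = 0 ∧ P 0 2 = 0 ∧ P 1 0 = 0 ∧ P 2 0 = 0) := by
  subst hΓ hK hP
  have hdet : IsUnit Y.det := (isUnit_iff_isUnit_det Y).mp hYpd.isUnit
  have hYsymm : Y.IsSymm := isHermitian_iff_isSymm.mp hYpd.isHermitian
  have hPsymm : Y⁻¹.IsSymm := isHermitian_iff_isSymm.mp hYpd.inv.isHermitian
  rw [← mul_transpose_add_mul_feedback hYsymm hdet]
  set L := A + B * (G * Y⁻¹)
  refine ⟨?_, fun _ => ?_⟩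
  · have hS : (Y * Lᵀ + L * Y).IsSymm := by
      simpa [add_comm] using hYsymm.transpose_mul_add_mul Lᵀ
    have hR := (hPsymm.transpose_mul_add_mul L).add (isSymm_diagonal fun i => (γ i)⁻¹)
    rw [(hS.fromBlocks hYsymm.eq (isSymm_diagonal γ).neg).forall_dotProduct_mulVec_nonpos_iff,
      hR.forall_dotProduct_mulVec_nonpos_iff, ← inv_diagonal_of_ne_zero fun i => (hγ i).ne']
    exact posSemidef_neg_lmi_iff_riccati hYpd (posDef_diagonal_iff.mpr hγ)
  · have hcol := inv_apply_of_col_eq_zero_off_diag hdet (i := 0)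
      (fun j hj => by fin_cases j <;> simp_all)
    refine ⟨hPsymm, hYpd.inv, ?_, ?_, ?_, ?_, ?_⟩
    · rw [hcol, if_pos rfl, hY00, one_div, inv_inv]
    · rw [← hPsymm.apply 0 1, hcol]; simp
    · rw [← hPsymm.apply 0 2, hcol]; simp
    · rw [hcol]; simp
    · rw [hcol]; simp

/-- The LMI `[Y·Aᵀ + Gᵀ·Bᵀ + A·Y + B·G, Y; Y, −Γ] ≤ 0` holds if and only if the
Riccati-type inequality `(A + B·K)ᵀ·P + P·(A + B·K) + Γ⁻¹ ≤ 0` holds, where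
`K = G·Y⁻¹` and `P = Y⁻¹`; moreover, in that case `P` is symmetric positive
definite with `(1,1)` entry `η` and zero `(1,2)`, `(1,3)`, `(2,1)`, `(3,1)`
entries. -/
theorem lmi_iff_riccati
    (A : Matrix (Fin 3) (Fin 3) ℝ) (B : Matrix (Fin 3) (Fin 1) ℝ)
    (γ : Fin 3 → ℝ) (hγ : ∀ i, 0 < γ i)
    (Γ : Matrix (Fin 3) (Fin 3) ℝ) (hΓ : Γ = Matrix.diagonal γ)
    (η : ℝ) (hη : 0 < η)
    (Y : Matrix (Fin 3) (Fin 3) ℝ) (hYsymm : Y.IsSymm) (hYpd : Y.PosDef)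
    (hY00 : Y 0 0 = 1/η)
    (hY01 : Y 0 1 = 0) (hY02 : Y 0 2 = 0) (hY10 : Y 1 0 = 0) (hY20 : Y 2 0 = 0)
    (G : Matrix (Fin 1) (Fin 3) ℝ)
    (K : Matrix (Fin 1) (Fin 3) ℝ) (hK : K = G * Y⁻¹)
    (P : Matrix (Fin 3) (Fin 3) ℝ) (hP : P = Y⁻¹) :
    ((∀ x : Fin 3 ⊕ Fin 3 → ℝ,
        x ⬝ᵥ (Matrix.fromBlocks (Y * Aᵀ + Gᵀ * Bᵀ + A * Y + B * G) Y Y (-Γ)).mulVec x ≤ 0)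
      ↔ (∀ x : Fin 3 → ℝ,
        x ⬝ᵥ ((A + B * K)ᵀ * P + P * (A + B * K)
              + Matrix.diagonal (fun i => (γ i)⁻¹)).mulVec x ≤ 0)) ∧
    ((∀ x : Fin 3 ⊕ Fin 3 → ℝ,
        x ⬝ᵥ (Matrix.fromBlocks (Y * Aᵀ + Gᵀ * Bᵀ + A * Y + B * G) Y Y (-Γ)).mulVec x ≤ 0) →
      P.IsSymm ∧ P.PosDef ∧ P 0 0 = η ∧
      P 0 1 = 0 ∧ P 0 2 = 0 ∧ P 1 0 = 0 ∧ P 2 0 = 0) :=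
  lmi_iff_riccati_general A B γ hγ Γ hΓ η Y hYpd hY00 hY10 hY20 G K hK P hP
end

section
/- Let G be a 1×3 real matrix, Y a 3×3 symmetric positive definite real matrix, and β > 0, ζ > 0 real numbers. If the 4×4 block matrix ![![−β·I₃, Gᵀ], ![G, −1]] is negative definite and the 6×6 block matrix ![![Y, I₃], ![I₃, ζ·I₃]] is positive definite, then the ℓ²-operator norm of K = G·Y⁻¹ satisfies ‖K‖₂ < √β · ζ. -/
open Matrix
open scoped InnerProductSpace

/-!
Testing the first block inequality against `(v, G v)` gives `‖G v‖² < β ‖v‖²` for `v ≠ 0`,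
hence `‖G‖ < √β` (the unit sphere is compact). Testing the second one against `(ζ u, -u)` gives
`‖u‖² ≤ ζ ⟪Y u, u⟫ ≤ ζ ‖Y u‖ ‖u‖`, so `‖Y⁻¹‖ ≤ ζ`, and `‖G Y⁻¹‖ ≤ ‖G‖ ‖Y⁻¹‖` concludes.
-/

theorem ContinuousLinearMap.opNorm_lt_of_forall_ne_zero {E F : Type*}
    [NormedAddCommGroup E] [NormedSpace ℝ E] [ProperSpace E] [Nontrivial E]
    [NormedAddCommGroup F] [NormedSpace ℝ F] (f : E →L[ℝ] F) {C : ℝ}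
    (h : ∀ x ≠ 0, ‖f x‖ < C * ‖x‖) : ‖f‖ < C := by
  have hsphere : (Metric.sphere (0 : E) 1).Nonempty := NormedSpace.sphere_nonempty.mpr zero_le_one
  obtain ⟨x, hx, hfx⟩ :=
    ((isCompact_sphere (0 : E) 1).image f.continuous.norm).sSup_mem (hsphere.image _)
  rw [← f.sSup_sphere_eq_norm, ← hfx]
  rw [mem_sphere_zero_iff_norm] at hx
  simpa [hx] using h x (norm_ne_zero_iff.mp (hx ▸ one_ne_zero))

theorem norm_le_mul_norm_of_sq_le_mul_inner {E : Type*} [NormedAddCommGroup E]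
    [InnerProductSpace ℝ E] {x y : E} {ζ : ℝ} (hζ : 0 ≤ ζ) (h : ‖x‖ ^ 2 ≤ ζ * ⟪y, x⟫_ℝ) :
    ‖x‖ ≤ ζ * ‖y‖ := by
  rcases (norm_nonneg x).eq_or_lt with hx | hx
  · rw [← hx]; positivity
  · have : ‖x‖ * ‖x‖ ≤ ζ * ‖y‖ * ‖x‖ :=
      calc ‖x‖ * ‖x‖ = ‖x‖ ^ 2 := (sq _).symm
        _ ≤ ζ * ⟪y, x⟫_ℝ := h
        _ ≤ ζ * (‖y‖ * ‖x‖) := by gcongr; exact real_inner_le_norm y x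
        _ = ζ * ‖y‖ * ‖x‖ := (mul_assoc _ _ _).symm
    exact le_of_mul_le_mul_right this hx

theorem EuclideanSpace.real_norm_sq_eq_dotProduct {n : Type*} [Fintype n]
    (x : EuclideanSpace ℝ n) : ‖x‖ ^ 2 = x.ofLp ⬝ᵥ x.ofLp := by
  rw [← real_inner_self_eq_norm_sq, EuclideanSpace.inner_eq_star_dotProduct, star_trivial]

namespace Matrix

variable {m n : Type*} [Fintype m] [Fintype n]

theorem sumElim_dotProduct_fromBlocks_mulVec_sumElim {R : Type*} [CommSemiring R]
    (A : Matrix n n R) (B : Matrix n m R) (C : Matrix m n R) (D : Matrix m m R)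
    (u : n → R) (v : m → R) :
    Sum.elim u v ⬝ᵥ fromBlocks A B C D *ᵥ Sum.elim u v
      = u ⬝ᵥ A *ᵥ u + u ⬝ᵥ B *ᵥ v + (v ⬝ᵥ C *ᵥ u + v ⬝ᵥ D *ᵥ v) := by
  simp only [fromBlocks_mulVec, sumElim_dotProduct_sumElim, dotProduct_add, Sum.elim_comp_inl,
    Sum.elim_comp_inr]

theorem mulVec_dotProduct_mulVec_lt_of_fromBlocks_negDef [DecidableEq m] [DecidableEq n]
    (G : Matrix m n ℝ) (β : ℝ)
    (h : ∀ x : n ⊕ m → ℝ, x ≠ 0 → x ⬝ᵥ fromBlocks (-(β • 1)) Gᵀ G (-1) *ᵥ x < 0)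
    {v : n → ℝ} (hv : v ≠ 0) : G *ᵥ v ⬝ᵥ G *ᵥ v < β * (v ⬝ᵥ v) := by
  have hx : Sum.elim v (G *ᵥ v) ≠ 0 := fun h0 =>
    hv (funext fun i => by simpa using congrFun h0 (.inl i))
  have := h _ hx
  rw [sumElim_dotProduct_fromBlocks_mulVec_sumElim, dotProduct_mulVec v Gᵀ, vecMul_transpose]
    at this
  simp only [neg_mulVec, smul_mulVec, one_mulVec, dotProduct_neg, dotProduct_smul,
    smul_eq_mul] at this
  linarith

theorem dotProduct_self_le_of_fromBlocks_posDef [DecidableEq n] (Y : Matrix n n ℝ) {ζ : ℝ}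
    (hζ : 0 < ζ)
    (h : ∀ x : n ⊕ n → ℝ, x ≠ 0 → 0 < x ⬝ᵥ fromBlocks Y 1 1 (ζ • 1) *ᵥ x)
    (u : n → ℝ) : u ⬝ᵥ u ≤ ζ * (u ⬝ᵥ Y *ᵥ u) := by
  rcases eq_or_ne u 0 with rfl | hu
  · simp
  have hx : Sum.elim (ζ • u) (-u) ≠ 0 := fun h0 =>
    hu (funext fun i => by simpa using congrFun h0 (.inr i))
  have := h _ hx
  rw [sumElim_dotProduct_fromBlocks_mulVec_sumElim] at this
  simp only [mulVec_smul, one_mulVec, smul_mulVec, mulVec_neg, dotProduct_smul, smul_dotProduct,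
    dotProduct_neg, neg_dotProduct, smul_eq_mul] at this
  nlinarith

theorem norm_toEuclideanLin_lt_of_fromBlocks_negDef [DecidableEq m] [DecidableEq n]
    (G : Matrix m n ℝ) (β : ℝ)
    (h : ∀ x : n ⊕ m → ℝ, x ≠ 0 → x ⬝ᵥ fromBlocks (-(β • 1)) Gᵀ G (-1) *ᵥ x < 0)
    {v : EuclideanSpace ℝ n} (hv : v ≠ 0) : ‖toEuclideanLin G v‖ < √β * ‖v‖ := by
  have hsq : ‖toEuclideanLin G v‖ ^ 2 < β * ‖v‖ ^ 2 := by
    simpa only [EuclideanSpace.real_norm_sq_eq_dotProduct, toLpLin_apply] using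
      mulVec_dotProduct_mulVec_lt_of_fromBlocks_negDef G β h (v := v.ofLp) (by simpa using hv)
  rwa [← Real.sqrt_sq (norm_nonneg v), ← Real.sqrt_mul' _ (sq_nonneg _),
    Real.lt_sqrt (norm_nonneg _)]

theorem norm_toEuclideanLin_inv_le_of_fromBlocks_posDef [DecidableEq n] (Y : Matrix n n ℝ)
    {ζ : ℝ} (hζ : 0 < ζ) (h : ∀ x : n ⊕ n → ℝ, x ≠ 0 → 0 < x ⬝ᵥ fromBlocks Y 1 1 (ζ • 1) *ᵥ x)
    (w : EuclideanSpace ℝ n) : ‖toEuclideanLin Y⁻¹ w‖ ≤ ζ * ‖w‖ := by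
  by_cases hY : IsUnit Y.det
  · set u := toEuclideanLin Y⁻¹ w
    have hYu : toEuclideanLin Y u = w := by
      simp [u, ← LinearMap.comp_apply, ← toLpLin_mul_same, mul_nonsing_inv _ hY]
    refine norm_le_mul_norm_of_sq_le_mul_inner hζ.le ?_
    rw [← hYu, EuclideanSpace.real_norm_sq_eq_dotProduct, EuclideanSpace.inner_eq_star_dotProduct,
      star_trivial]
    exact dotProduct_self_le_of_fromBlocks_posDef Y hζ h u.ofLp
  · rw [nonsing_inv_apply_not_isUnit _ hY, map_zero, LinearMap.zero_apply, norm_zero]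
    positivity

end Matrix

theorem K_norm_bound_general
    (G : Matrix (Fin 1) (Fin 3) ℝ)
    (Y : Matrix (Fin 3) (Fin 3) ℝ)
    (β ζ : ℝ) (hζ : 0 < ζ)
    (h1 : ∀ x : Fin 3 ⊕ Fin 1 → ℝ, x ≠ 0 →
      x ⬝ᵥ (Matrix.fromBlocks (-(β • (1 : Matrix (Fin 3) (Fin 3) ℝ))) Gᵀ G
              (-(1 : Matrix (Fin 1) (Fin 1) ℝ))).mulVec x < 0)
    (h2 : ∀ x : Fin 3 ⊕ Fin 3 → ℝ, x ≠ 0 →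
      0 < x ⬝ᵥ (Matrix.fromBlocks Y (1 : Matrix (Fin 3) (Fin 3) ℝ)
              (1 : Matrix (Fin 3) (Fin 3) ℝ)
              (ζ • (1 : Matrix (Fin 3) (Fin 3) ℝ))).mulVec x) :
    ‖LinearMap.toContinuousLinearMap (Matrix.toEuclideanLin (G * Y⁻¹))‖
      < Real.sqrt β * ζ := by
  set g := LinearMap.toContinuousLinearMap (toEuclideanLin G)
  set y := LinearMap.toContinuousLinearMap (toEuclideanLin Y⁻¹)
  have hg : ‖g‖ < √β :=
    g.opNorm_lt_of_forall_ne_zero fun v hv => norm_toEuclideanLin_lt_of_fromBlocks_negDef G β h1 hv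
  have hy : ‖y‖ ≤ ζ :=
    y.opNorm_le_bound hζ.le (norm_toEuclideanLin_inv_le_of_fromBlocks_posDef Y hζ h2)
  have hcomp : LinearMap.toContinuousLinearMap (toEuclideanLin (G * Y⁻¹)) = g.comp y := by
    ext1 v
    simp [g, y, toLpLin_mul_same]
  calc _ = ‖g.comp y‖ := by rw [hcomp]
    _ ≤ ‖g‖ * ‖y‖ := g.opNorm_comp_le y
    _ ≤ ‖g‖ * ζ := by gcongr
    _ < √β * ζ := by gcongr

/-- If `[−β·I₃, Gᵀ; G, −1] < 0` and `[Y, I₃; I₃, ζ·I₃] > 0` with `β, ζ > 0` and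
`Y` symmetric positive definite, then the ℓ²-operator norm of `K = G·Y⁻¹`
satisfies `‖K‖₂ < √β · ζ`. -/
theorem K_norm_bound
    (G : Matrix (Fin 1) (Fin 3) ℝ)
    (Y : Matrix (Fin 3) (Fin 3) ℝ) (hYsymm : Y.IsSymm) (hYpd : Y.PosDef)
    (β ζ : ℝ) (hβ : 0 < β) (hζ : 0 < ζ)
    (h1 : ∀ x : Fin 3 ⊕ Fin 1 → ℝ, x ≠ 0 →
      x ⬝ᵥ (Matrix.fromBlocks (-(β • (1 : Matrix (Fin 3) (Fin 3) ℝ))) Gᵀ G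
              (-(1 : Matrix (Fin 1) (Fin 1) ℝ))).mulVec x < 0)
    (h2 : ∀ x : Fin 3 ⊕ Fin 3 → ℝ, x ≠ 0 →
      0 < x ⬝ᵥ (Matrix.fromBlocks Y (1 : Matrix (Fin 3) (Fin 3) ℝ)
              (1 : Matrix (Fin 3) (Fin 3) ℝ)
              (ζ • (1 : Matrix (Fin 3) (Fin 3) ℝ))).mulVec x) :
    ‖LinearMap.toContinuousLinearMap (Matrix.toEuclideanLin (G * Y⁻¹))‖
      < Real.sqrt β * ζ :=
  K_norm_bound_general G Y β ζ hζ h1 h2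
end

section
/- Fix positive reals Rt, Lt, Ct, and define the 3×3 real matrix Â = ![![0, 1/Ct, 0], ![−1/Lt, −Rt/Lt, 0], ![−1, 0, 0]] and the column vector B̂ = (0, 1/Lt, 0)ᵀ. Then the pair (Â, B̂) is controllable: the Kalman controllability matrix [B̂ | Â·B̂ | Â²·B̂], i.e. the 3×3 matrix with columns B̂, Â·B̂ and Â²·B̂, is invertible. -/
/-!
Only the last Kalman column `Â²·B̂` reaches the integrator state, so expanding the determinant
along the third row leaves a `2 × 2` minor, and the determinant is `1/(Ct² Lt³) ≠ 0`.
-/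

open Matrix

theorem augmentedDGU_kalmanMatrix_eq {K : Type*} [Field K] (Rt Lt Ct : K) :
    (Matrix.of fun i j : Fin 3 =>
      ((!![0, 1/Ct, 0; -1/Lt, -Rt/Lt, 0; -1, 0, 0] ^ (j : ℕ)) * !![0; 1/Lt; 0]) i 0)
      = !![0, 1/(Ct*Lt), -Rt/(Ct*Lt^2);
           1/Lt, -Rt/Lt^2, Rt^2/Lt^3 - 1/(Ct*Lt^2);
           0, 0, -1/(Ct*Lt)] := by
  ext i j
  fin_cases i <;> fin_cases j <;> simp [mul_apply, Fin.sum_univ_three, pow_succ] <;> ring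

theorem det_augmentedDGU_kalmanMatrix {K : Type*} [Field K] (Rt Lt Ct : K) :
    (!![0, 1/(Ct*Lt), -Rt/(Ct*Lt^2);
        1/Lt, -Rt/Lt^2, Rt^2/Lt^3 - 1/(Ct*Lt^2);
        0, 0, -1/(Ct*Lt)] : Matrix (Fin 3) (Fin 3) K).det = (Ct^2 * Lt^3)⁻¹ := by
  rw [det_fin_three]
  simp only [of_apply, cons_val', cons_val_zero, cons_val_one, cons_val, cons_val_fin_one]
  ring

theorem augmented_pair_controllable_general
    (Rt Lt Ct : ℝ) (hLt : 0 < Lt) (hCt : 0 < Ct)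
    (A : Matrix (Fin 3) (Fin 3) ℝ)
    (hA : A = !![0, 1/Ct, 0; -1/Lt, -Rt/Lt, 0; -1, 0, 0])
    (B : Matrix (Fin 3) (Fin 1) ℝ)
    (hB : B = !![0; 1/Lt; 0]) :
    IsUnit (Matrix.of (fun i j : Fin 3 => ((A ^ (j : ℕ)) * B) i 0)) := by
  rw [isUnit_iff_isUnit_det, hA, hB, augmentedDGU_kalmanMatrix_eq, det_augmentedDGU_kalmanMatrix,
    isUnit_iff_ne_zero]
  positivity

/-- The augmented DGU pair `(Â, B̂)` is controllable: the Kalman controllability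
matrix `[B̂ | Â·B̂ | Â²·B̂]` is invertible. -/
theorem augmented_pair_controllable
    (Rt Lt Ct : ℝ) (hRt : 0 < Rt) (hLt : 0 < Lt) (hCt : 0 < Ct)
    (A : Matrix (Fin 3) (Fin 3) ℝ)
    (hA : A = !![0, 1/Ct, 0; -1/Lt, -Rt/Lt, 0; -1, 0, 0])
    (B : Matrix (Fin 3) (Fin 1) ℝ)
    (hB : B = !![0; 1/Lt; 0]) :
    IsUnit (Matrix.of (fun i j : Fin 3 => ((A ^ (j : ℕ)) * B) i 0)) :=
  augmented_pair_controllable_general Rt Lt Ct hLt hCt A hA B hB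
end
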